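/- If u₂, u₃ are independent standard normal random variables, p ∈ [0,1], and c, γ satisfy 0 < c(1-p) < 2γ, then E_{u₃}[ (1/c)·log E_{u₂} exp( c·(√(1-p)·u₂ + √p·u₃)²/(4γ) ) ] = -(1/(2c))·log((2γ - c(1-p))/(2γ)) + p/(2(2γ - c(1-p))). -/

import Mathlib

/-!
Writing the exponent as `α (a u₂ + m)²` with `α = c / (4γ)`, `a = √(1-p)`, `m = √p u₃`, the
condition `2αa² < 1` lets one complete the square against the Gaussian density, giving
`E_{u₂} exp (α (a u₂ + m)²) = (1 - 2αa²)^(-1/2) exp (αm² / (1 - 2αa²))`. Hence `(1/c) log` of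
the inner expectation is affine in `u₃²`, and the outer expectation only needs `E[u₃²] = 1`.
-/

open Real MeasureTheory ProbabilityTheory

lemma integral_rexp_quadratic {b : ℝ} (hb : b < 0) (c d : ℝ) :
    ∫ x : ℝ, rexp (b * x ^ 2 + c * x + d) = √(π / -b) * rexp (d - c ^ 2 / (4 * b)) := by
  apply Complex.ofReal_injective
  have hπb : 0 ≤ π / -b := div_nonneg pi_pos.le (neg_nonneg.mpr hb.le)
  rw [← integral_complex_ofReal, Complex.ofReal_mul, sqrt_eq_rpow, Complex.ofReal_cpow hπb]
  push_cast
  exact integral_cexp_quadratic (by simpa using hb) c d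

lemma integral_exp_quadratic_gaussianReal {β : ℝ} (hβ : β < 1 / 2) (b : ℝ) :
    ∫ x, rexp (β * x ^ 2 + b * x) ∂gaussianReal 0 1 =
      (√(1 - 2 * β))⁻¹ * rexp (b ^ 2 / (2 * (1 - 2 * β))) := by
  have hβ' : 0 < 1 - 2 * β := by linarith
  have hpdf : ∀ x, gaussianPDFReal 0 1 x • rexp (β * x ^ 2 + b * x) =
      (√(2 * π))⁻¹ * rexp ((β - 1 / 2) * x ^ 2 + b * x + 0) := by
    intro x
    simp only [gaussianPDFReal, NNReal.coe_one, mul_one, sub_zero, smul_eq_mul]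
    rw [mul_assoc, ← exp_add]
    ring_nf
  simp_rw [integral_gaussianReal_eq_integral_smul one_ne_zero, hpdf, integral_const_mul,
    integral_rexp_quadratic (by linarith : β - 1 / 2 < 0), ← mul_assoc]
  congr 1
  · rw [← sqrt_inv, ← sqrt_inv, ← sqrt_mul (by positivity)]
    congr 1
    rw [show -(β - 1 / 2) = (1 - 2 * β) / 2 by ring]
    field_simp
  · rw [show 4 * (β - 1 / 2) = -(2 * (1 - 2 * β)) by ring, div_neg, zero_sub, neg_neg]

lemma integral_exp_mul_sq_gaussianReal {α a : ℝ} (h : 2 * α * a ^ 2 < 1) (m : ℝ) :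
    ∫ x, rexp (α * (a * x + m) ^ 2) ∂gaussianReal 0 1 =
      (√(1 - 2 * α * a ^ 2))⁻¹ * rexp (α * m ^ 2 / (1 - 2 * α * a ^ 2)) := by
  have h' : 0 < 1 - 2 * α * a ^ 2 := by linarith
  have hexp : ∀ x, rexp (α * (a * x + m) ^ 2) =
      rexp ((α * a ^ 2) * x ^ 2 + (2 * α * a * m) * x) * rexp (α * m ^ 2) := by
    intro x
    rw [← exp_add]
    ring_nf
  simp_rw [hexp, integral_mul_const,
    integral_exp_quadratic_gaussianReal (β := α * a ^ 2) (by linarith),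
    mul_assoc, ← exp_add, ← mul_assoc]
  congr 3
  field_simp
  ring

lemma integral_sq_gaussianReal_zero (v : NNReal) : ∫ x, x ^ 2 ∂gaussianReal 0 v = v := by
  rw [← variance_id_gaussianReal (μ := 0) (v := v),
    variance_of_integral_eq_zero aemeasurable_id integral_id_gaussianReal]
  rfl

lemma integral_add_mul_sq_gaussianReal (v : NNReal) (a b : ℝ) :
    ∫ x, a + b * x ^ 2 ∂gaussianReal 0 v = a + b * v := by
  have hsq : Integrable (fun x ↦ x ^ 2) (gaussianReal 0 v) :=
    (memLp_id_gaussianReal 2).integrable_sq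
  rw [integral_add (integrable_const a) (hsq.const_mul b), integral_const_mul,
    integral_sq_gaussianReal_zero, integral_const, probReal_univ, one_smul]

/-- Closed-form evaluation of the spherical part at the second level of lifting. -/
theorem spherical_second_level (p c γ : ℝ) (hp0 : 0 ≤ p) (hp1 : p ≤ 1)
    (hpos : 0 < c * (1 - p)) (hlt : c * (1 - p) < 2 * γ) :
    ∫ u₃, (1 / c) * Real.log (∫ u₂,
        Real.exp (c * (Real.sqrt (1 - p) * u₂ + Real.sqrt p * u₃) ^ 2 / (4 * γ))
          ∂(gaussianReal 0 1)) ∂(gaussianReal 0 1) =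
      -(1 / (2 * c)) * Real.log ((2 * γ - c * (1 - p)) / (2 * γ)) +
        p / (2 * (2 * γ - c * (1 - p))) := by
  have hγ : 0 < γ := by linarith
  have hc : c ≠ 0 := left_ne_zero_of_mul hpos.ne'
  have hK : 0 < 2 * γ - c * (1 - p) := by linarith
  have hr : 1 - 2 * (c / (4 * γ)) * √(1 - p) ^ 2 = (2 * γ - c * (1 - p)) / (2 * γ) := by
    rw [sq_sqrt (by linarith)]
    field_simp
    ring
  have hinner (u : ℝ) : (1 / c) * log (∫ x,
      rexp (c * (√(1 - p) * x + √p * u) ^ 2 / (4 * γ)) ∂gaussianReal 0 1) =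
        -(1 / (2 * c)) * log ((2 * γ - c * (1 - p)) / (2 * γ)) +
          p / (2 * (2 * γ - c * (1 - p))) * u ^ 2 := by
    simp_rw [mul_div_right_comm c]
    rw [integral_exp_mul_sq_gaussianReal (by rw [← sub_pos, hr]; positivity), hr, mul_pow,
      sq_sqrt hp0, log_mul (by positivity) (exp_pos _).ne', log_inv, log_sqrt (by positivity),
      log_exp]
    field_simp
    ring
  simp_rw [hinner]
  rw [integral_add_mul_sq_gaussianReal, NNReal.coe_one, mul_one]
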